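/- arXiv:0910.4004 — 2 statements merged into one kernel-verified Lean document; each statement's English description precedes it below -/
import Mathlib

section
/- Let α, β ∈ ℝ with α ≠ 0 and β ≠ 0, and let u, w : ℝ² → ℝ be smooth functions of (x,y) satisfying the hydrodynamic-type system u_y + w u_x = (2α)⁻¹ w_x and w_y = (2α/(3β)) w_x − w w_x − 2α u u_x everywhere. Then the pair of reduction equations holds with v_x replaced by w: namely ∂_y(u_y + u_x w) + ∂_x(u_y w + u_x w² + u u_x) = (3β)⁻¹ w_{xx}. -/
/-- Partial derivative in `x` of a function on `ℝ² = (x,y)`. -/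
noncomputable def pdx (f : ℝ × ℝ → ℝ) (q : ℝ × ℝ) : ℝ :=
  deriv (fun s => f (s, q.2)) q.1

/-- Partial derivative in `y` of a function on `ℝ² = (x,y)`. -/
noncomputable def pdy (f : ℝ × ℝ → ℝ) (q : ℝ × ℝ) : ℝ :=
  deriv (fun s => f (q.1, s)) q.2

/-!
The first equation of the system says that `u_y + u_x w = (2α)⁻¹ w_x`, and together
with the second it turns the other flux into `u_y w + u_x w² + u u_x = (3β)⁻¹ w_x - (2α)⁻¹ w_y`.
The left-hand side of the reduction is therefore `(3β)⁻¹ w_xx + (2α)⁻¹ (w_xy - w_yx)`, and the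
mixed partials of the smooth function `w` commute.
-/

section PartialDerivatives

variable {E : Type*} [NormedAddCommGroup E] [NormedSpace ℝ E]

theorem DifferentiableAt.hasDerivAt_comp_prodMk_left {Φ : ℝ × ℝ → E} {q : ℝ × ℝ}
    (hΦ : DifferentiableAt ℝ Φ q) :
    HasDerivAt (fun s => Φ (s, q.2)) (fderiv ℝ Φ q (1, 0)) q.1 := by
  simpa [Function.comp_def] using
    hΦ.hasFDerivAt.comp_hasDerivAt q.1 ((hasDerivAt_id q.1).prodMk (hasDerivAt_const q.1 q.2))

theorem DifferentiableAt.hasDerivAt_comp_prodMk_right {Φ : ℝ × ℝ → E} {q : ℝ × ℝ}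
    (hΦ : DifferentiableAt ℝ Φ q) :
    HasDerivAt (fun s => Φ (q.1, s)) (fderiv ℝ Φ q (0, 1)) q.2 := by
  simpa [Function.comp_def] using
    hΦ.hasFDerivAt.comp_hasDerivAt q.2 ((hasDerivAt_const q.2 q.1).prodMk (hasDerivAt_id q.2))

end PartialDerivatives

variable {f g : ℝ × ℝ → ℝ}

theorem pdx_eq_fderiv {q : ℝ × ℝ} (hf : DifferentiableAt ℝ f q) : pdx f q = fderiv ℝ f q (1, 0) :=
  hf.hasDerivAt_comp_prodMk_left.deriv

theorem pdy_eq_fderiv {q : ℝ × ℝ} (hf : DifferentiableAt ℝ f q) : pdy f q = fderiv ℝ f q (0, 1) :=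
  hf.hasDerivAt_comp_prodMk_right.deriv

theorem pdx_eq_fderiv_apply (hf : Differentiable ℝ f) : pdx f = fun q => fderiv ℝ f q (1, 0) :=
  funext fun q => pdx_eq_fderiv (hf q)

theorem pdy_eq_fderiv_apply (hf : Differentiable ℝ f) : pdy f = fun q => fderiv ℝ f q (0, 1) :=
  funext fun q => pdy_eq_fderiv (hf q)

theorem pdx_const_mul (c : ℝ) (q : ℝ × ℝ) : pdx (fun s => c * f s) q = c * pdx f q :=
  deriv_const_mul_field c

theorem pdy_const_mul (c : ℝ) (q : ℝ × ℝ) : pdy (fun s => c * f s) q = c * pdy f q :=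
  deriv_const_mul_field c

theorem pdx_sub {q : ℝ × ℝ} (hf : DifferentiableAt ℝ f q) (hg : DifferentiableAt ℝ g q) :
    pdx (fun s => f s - g s) q = pdx f q - pdx g q :=
  (hf.hasDerivAt_comp_prodMk_left.sub hg.hasDerivAt_comp_prodMk_left).deriv.trans
    (by rw [pdx_eq_fderiv hf, pdx_eq_fderiv hg])

theorem pdx_fderiv_apply {q : ℝ × ℝ} (hf : DifferentiableAt ℝ (fderiv ℝ f) q) (v : ℝ × ℝ) :
    pdx (fun s => fderiv ℝ f s v) q = fderiv ℝ (fderiv ℝ f) q (1, 0) v := by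
  unfold pdx
  simpa using (hf.hasDerivAt_comp_prodMk_left.clm_apply (hasDerivAt_const q.1 v)).deriv

theorem pdy_fderiv_apply {q : ℝ × ℝ} (hf : DifferentiableAt ℝ (fderiv ℝ f) q) (v : ℝ × ℝ) :
    pdy (fun s => fderiv ℝ f s v) q = fderiv ℝ (fderiv ℝ f) q (0, 1) v := by
  unfold pdy
  simpa using (hf.hasDerivAt_comp_prodMk_right.clm_apply (hasDerivAt_const q.2 v)).deriv

theorem ContDiff.differentiable_fderiv (hf : ContDiff ℝ 2 f) : Differentiable ℝ (fderiv ℝ f) :=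
  (hf.fderiv_right (m := 1) (by norm_num)).differentiable one_ne_zero

theorem ContDiff.differentiable_pdx (hf : ContDiff ℝ 2 f) : Differentiable ℝ (pdx f) := by
  rw [pdx_eq_fderiv_apply (hf.differentiable two_ne_zero)]
  exact fun q => (hf.differentiable_fderiv q).clm_apply (differentiableAt_const _)

theorem ContDiff.differentiable_pdy (hf : ContDiff ℝ 2 f) : Differentiable ℝ (pdy f) := by
  rw [pdy_eq_fderiv_apply (hf.differentiable two_ne_zero)]
  exact fun q => (hf.differentiable_fderiv q).clm_apply (differentiableAt_const _)

theorem ContDiff.pdy_pdx (hf : ContDiff ℝ 2 f) : pdy (pdx f) = pdx (pdy f) := by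
  funext q
  have hf' := hf.differentiable two_ne_zero
  rw [pdx_eq_fderiv_apply hf', pdy_eq_fderiv_apply hf',
    pdy_fderiv_apply (hf.differentiable_fderiv q), pdx_fderiv_apply (hf.differentiable_fderiv q)]
  exact hf.contDiffAt.isSymmSndFDerivAt (by simp) _ _

theorem order_three_reduction_from_hydrodynamic_system_general (α β : ℝ) (hα : α ≠ 0)
    (u w : ℝ × ℝ → ℝ) (hw : ContDiff ℝ (⊤ : ℕ∞) w)
    (h1 : ∀ q : ℝ × ℝ, pdy u q + w q * pdx u q = (2 * α)⁻¹ * pdx w q)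
    (h2 : ∀ q : ℝ × ℝ,
      pdy w q = (2 * α / (3 * β)) * pdx w q - w q * pdx w q - 2 * α * u q * pdx u q) :
    ∀ q : ℝ × ℝ,
      pdy (fun s => pdy u s + pdx u s * w s) q
        + pdx (fun s => pdy u s * w s + pdx u s * (w s) ^ 2 + u s * pdx u s) q
        = (3 * β)⁻¹ * pdx (pdx w) q := by
  intro q
  have hw2 : ContDiff ℝ 2 w := hw.of_le (WithTop.coe_le_coe.2 le_top)
  have hαα : (2 * α)⁻¹ * (2 * α) = 1 := inv_mul_cancel₀ (mul_ne_zero two_ne_zero hα)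
  have first_flux : (fun s => pdy u s + pdx u s * w s) = fun s => (2 * α)⁻¹ * pdx w s :=
    funext fun s => by linear_combination h1 s
  have second_flux : (fun s => pdy u s * w s + pdx u s * (w s) ^ 2 + u s * pdx u s)
      = fun s => (3 * β)⁻¹ * pdx w s - (2 * α)⁻¹ * pdy w s :=
    funext fun s => by
      linear_combination w s * h1 s + (2 * α)⁻¹ * h2 s
        + ((3 * β)⁻¹ * pdx w s - u s * pdx u s) * hαα
  rw [first_flux, second_flux, pdy_const_mul,
    pdx_sub ((hw2.differentiable_pdx q).const_mul _) ((hw2.differentiable_pdy q).const_mul _),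
    pdx_const_mul, pdx_const_mul, hw2.pdy_pdx]
  ring

/-- If `u`, `w` satisfy the hydrodynamic-type system
`u_y + w u_x = (2α)⁻¹ w_x`, `w_y = (2α/(3β)) w_x − w w_x − 2α u u_x`, then the order `k = 3`
reduction equation holds with `v_x` replaced by `w`:
`∂_y(u_y + u_x w) + ∂_x(u_y w + u_x w² + u u_x) = (3β)⁻¹ w_{xx}`. -/
theorem order_three_reduction_from_hydrodynamic_system (α β : ℝ) (hα : α ≠ 0) (hβ : β ≠ 0)
    (u w : ℝ × ℝ → ℝ) (hu : ContDiff ℝ (⊤ : ℕ∞) u) (hw : ContDiff ℝ (⊤ : ℕ∞) w)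
    (h1 : ∀ q : ℝ × ℝ, pdy u q + w q * pdx u q = (2 * α)⁻¹ * pdx w q)
    (h2 : ∀ q : ℝ × ℝ,
      pdy w q = (2 * α / (3 * β)) * pdx w q - w q * pdx w q - 2 * α * u q * pdx u q) :
    ∀ q : ℝ × ℝ,
      pdy (fun s => pdy u s + pdx u s * w s) q
        + pdx (fun s => pdy u s * w s + pdx u s * (w s) ^ 2 + u s * pdx u s) q
        = (3 * β)⁻¹ * pdx (pdx w) q :=
  order_three_reduction_from_hydrodynamic_system_general α β hα u w hw h1 h2
end

section
/- Let N ≥ 1, let α, c₁, …, c_N ∈ ℝ with Σᵢ cᵢ = 0, and let w₁, …, w_N : ℝ² → ℝ be smooth functions of (x,y). Set u = Σ_{j=1}^N c_j w_j. Suppose that for every i, ∂_y wᵢ = ( wᵢ − α u ) ∂_x wᵢ + ∂_x u holds everywhere. Then for every (x,y) ∈ ℝ² and every p ∈ ℝ with p > max_i wᵢ(x,y), the function L(x,y,p) = p − Σᵢ cᵢ ln(p − wᵢ(x,y)) satisfies the y-flow Lax equation of the interpolating-system hierarchy: ∂_y L = (p − α u) ∂_x L − (∂_x u) ∂_p L.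 -/
/-- Partial derivative in `x` of a function on `ℝ³ = (x,y,p)`. -/
noncomputable def pd3x (f : ℝ × ℝ × ℝ → ℝ) (r : ℝ × ℝ × ℝ) : ℝ :=
  deriv (fun s => f (s, r.2.1, r.2.2)) r.1

/-- Partial derivative in `y` of a function on `ℝ³ = (x,y,p)`. -/
noncomputable def pd3y (f : ℝ × ℝ × ℝ → ℝ) (r : ℝ × ℝ × ℝ) : ℝ :=
  deriv (fun s => f (r.1, s, r.2.2)) r.2.1

/-- Partial derivative in the spectral variable `p` of a function on `ℝ³ = (x,y,p)`. -/
noncomputable def pd3p (f : ℝ × ℝ × ℝ → ℝ) (r : ℝ × ℝ × ℝ) : ℝ :=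
  deriv (fun s => f (r.1, r.2.1, s)) r.2.2

/-- The waterbag Lax function `L(x,y,p) = p − Σᵢ cᵢ ln(p − wᵢ(x,y))`. -/
noncomputable def waterbagL {N : ℕ} (c : Fin N → ℝ) (w : Fin N → ℝ × ℝ → ℝ)
    (r : ℝ × ℝ × ℝ) : ℝ :=
  r.2.2 - ∑ i, c i * Real.log (r.2.2 - w i (r.1, r.2.1))

/-!
The `wᵢ`-dependence of `L` is only through the logarithms, so each partial derivative of `L`
is a sum of simple fractions: `∂_x L = Σ cᵢ ∂_x wᵢ / (p − wᵢ)`, likewise for `y`, and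
`∂_p L = 1 − Σ cᵢ / (p − wᵢ)`. Inserting the flow equation in `∂_y L` and writing
`wᵢ − α u = (p − α u) − (p − wᵢ)` splits each summand into a term of `(p − α u) ∂_x L`,
the term `−cᵢ ∂_x wᵢ`, which sums to `−u_x`, and a term of `u_x Σ cᵢ / (p − wᵢ)`.
-/

open Real

section Calculus

variable {ι : Type*} [Fintype ι] (c : ι → ℝ)

theorem hasDerivAt_sub_sum_mul_log_sub {W : ι → ℝ → ℝ} {W' : ι → ℝ} {t p : ℝ}
    (hW : ∀ i, HasDerivAt (W i) (W' i) t) (hp : ∀ i, W i t < p) :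
    HasDerivAt (fun s => p - ∑ i, c i * log (p - W i s))
      (∑ i, c i * (W' i / (p - W i t))) t := by
  have hlog (i : ι) : HasDerivAt (fun s => c i * log (p - W i s))
      (c i * ((0 - W' i) / (p - W i t))) t :=
    (((hasDerivAt_const t p).sub (hW i)).log (sub_pos.2 (hp i)).ne').const_mul (c i)
  refine ((HasDerivAt.fun_sum fun i _ => hlog i).const_sub p).congr_deriv ?_
  simp [neg_div]

theorem hasDerivAt_id_sub_sum_mul_log_sub {a : ι → ℝ} {p : ℝ} (hp : ∀ i, a i < p) :
    HasDerivAt (fun s => s - ∑ i, c i * log (s - a i)) (1 - ∑ i, c i / (p - a i)) p := by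
  have hlog (i : ι) : HasDerivAt (fun s => c i * log (s - a i)) (c i * (1 / (p - a i))) p :=
    (((hasDerivAt_id' p).sub_const (a i)).log (sub_pos.2 (hp i)).ne').const_mul (c i)
  refine ((hasDerivAt_id' p).sub (HasDerivAt.fun_sum fun i _ => hlog i)).congr_deriv ?_
  simp only [mul_one_div]

end Calculus

section PartialDerivatives

variable {f : ℝ × ℝ → ℝ} {q : ℝ × ℝ}

theorem DifferentiableAt.hasDerivAt_pdx (hf : DifferentiableAt ℝ f q) :
    HasDerivAt (fun s => f (s, q.2)) (pdx f q) q.1 :=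
  (hf.comp q.1 (differentiableAt_id.prodMk (differentiableAt_const _))).hasDerivAt

theorem DifferentiableAt.hasDerivAt_pdy (hf : DifferentiableAt ℝ f q) :
    HasDerivAt (fun s => f (q.1, s)) (pdy f q) q.2 :=
  (hf.comp q.2 ((differentiableAt_const _).prodMk differentiableAt_id)).hasDerivAt

theorem pdx_sum_mul {ι : Type*} [Fintype ι] (c : ι → ℝ) {w : ι → ℝ × ℝ → ℝ}
    (hw : ∀ j, DifferentiableAt ℝ (w j) q) :
    pdx (fun q => ∑ j, c j * w j q) q = ∑ j, c j * pdx (w j) q :=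
  (HasDerivAt.fun_sum fun j _ => ((hw j).hasDerivAt_pdx).const_mul (c j)).deriv

end PartialDerivatives

section WaterbagL

variable {N : ℕ} (c : Fin N → ℝ) {w : Fin N → ℝ × ℝ → ℝ} {q : ℝ × ℝ} {p : ℝ}

theorem pd3x_waterbagL (hw : ∀ i, DifferentiableAt ℝ (w i) q) (hp : ∀ i, w i q < p) :
    pd3x (waterbagL c w) (q.1, q.2, p) = ∑ i, c i * (pdx (w i) q / (p - w i q)) :=
  (hasDerivAt_sub_sum_mul_log_sub c (fun i => (hw i).hasDerivAt_pdx) hp).deriv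

theorem pd3y_waterbagL (hw : ∀ i, DifferentiableAt ℝ (w i) q) (hp : ∀ i, w i q < p) :
    pd3y (waterbagL c w) (q.1, q.2, p) = ∑ i, c i * (pdy (w i) q / (p - w i q)) :=
  (hasDerivAt_sub_sum_mul_log_sub c (fun i => (hw i).hasDerivAt_pdy) hp).deriv

theorem pd3p_waterbagL (hp : ∀ i, w i q < p) :
    pd3p (waterbagL c w) (q.1, q.2, p) = 1 - ∑ i, c i / (p - w i q) :=
  (hasDerivAt_id_sub_sum_mul_log_sub c hp).deriv

end WaterbagL

theorem sum_mul_div_eq_of_flow {ι : Type*} [Fintype ι] (c w wx wy : ι → ℝ) {a p ux : ℝ}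
    (hp : ∀ i, p - w i ≠ 0) (hux : ux = ∑ i, c i * wx i)
    (hflow : ∀ i, wy i = (w i - a) * wx i + ux) :
    ∑ i, c i * (wy i / (p - w i))
      = (p - a) * ∑ i, c i * (wx i / (p - w i)) - ux * (1 - ∑ i, c i / (p - w i)) := by
  have hsplit (i : ι) : c i * (wy i / (p - w i))
      = (p - a) * (c i * (wx i / (p - w i))) - c i * wx i + ux * (c i / (p - w i)) := by
    rw [hflow i]
    field_simp [hp i]
    ring
  rw [Finset.sum_congr rfl fun i _ => hsplit i, Finset.sum_add_distrib, Finset.sum_sub_distrib,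
    ← Finset.mul_sum, ← Finset.mul_sum, ← hux]
  ring

theorem waterbag_y_flow_general (N : ℕ) (α : ℝ) (c : Fin N → ℝ)
    (w : Fin N → ℝ × ℝ → ℝ)
    (hw : ∀ i, ContDiff ℝ (⊤ : ℕ∞) (w i))
    (u : ℝ × ℝ → ℝ) (hu : ∀ q : ℝ × ℝ, u q = ∑ j, c j * w j q)
    (hflow : ∀ i, ∀ q : ℝ × ℝ,
      pdy (w i) q = (w i q - α * u q) * pdx (w i) q + pdx u q) :
    ∀ q : ℝ × ℝ, ∀ p : ℝ, (∀ i, w i q < p) →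
      pd3y (waterbagL c w) (q.1, q.2, p)
        = (p - α * u q) * pd3x (waterbagL c w) (q.1, q.2, p)
          - pdx u q * pd3p (waterbagL c w) (q.1, q.2, p) := by
  intro q p hp
  have hdiff (i : Fin N) : DifferentiableAt ℝ (w i) q := (hw i).differentiable (by simp) q
  have hux : pdx u q = ∑ j, c j * pdx (w j) q := by
    rw [show u = _ from funext hu]
    exact pdx_sum_mul c hdiff
  rw [pd3x_waterbagL c hdiff hp, pd3y_waterbagL c hdiff hp, pd3p_waterbagL c hp]
  exact sum_mul_div_eq_of_flow c _ _ _ (fun i => (sub_pos.2 (hp i)).ne') hux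
    (fun i => hflow i q)

/-- If the waterbag fields `wᵢ` satisfy the hydrodynamic-type system
`∂_y wᵢ = (wᵢ − α u)∂_x wᵢ + ∂_x u` with `u = Σⱼ cⱼ wⱼ`, then the waterbag Lax function
`L = p − Σᵢ cᵢ ln(p − wᵢ)` satisfies the `y`-flow Lax equation
`∂_y L = (p − α u)∂_x L − u_x ∂_p L` wherever `p > maxᵢ wᵢ`. -/
theorem waterbag_y_flow (N : ℕ) (hN : 1 ≤ N) (α : ℝ) (c : Fin N → ℝ)
    (hc : ∑ i, c i = 0) (w : Fin N → ℝ × ℝ → ℝ)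
    (hw : ∀ i, ContDiff ℝ (⊤ : ℕ∞) (w i))
    (u : ℝ × ℝ → ℝ) (hu : ∀ q : ℝ × ℝ, u q = ∑ j, c j * w j q)
    (hflow : ∀ i, ∀ q : ℝ × ℝ,
      pdy (w i) q = (w i q - α * u q) * pdx (w i) q + pdx u q) :
    ∀ q : ℝ × ℝ, ∀ p : ℝ, (∀ i, w i q < p) →
      pd3y (waterbagL c w) (q.1, q.2, p)
        = (p - α * u q) * pd3x (waterbagL c w) (q.1, q.2, p)
          - pdx u q * pd3p (waterbagL c w) (q.1, q.2, p) :=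
  waterbag_y_flow_general N α c w hw u hu hflow
end
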